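/- For every integer n ≥ 0, the sum over all Dyck paths P of length 2n of 2^(number of downsteps of P that leave from even height) equals the number of little Schröder paths of length 2n. -/

import Mathlib

/-- A step of a Schröder path: upstep, downstep, or a *double* horizontal step. -/
inductive SchStep : Type
  | up : SchStep
  | down : SchStep
  | horiz : SchStep
deriving DecidableEq

/-- The number of unit steps a step occupies: `horiz` is a double horizontal step. -/
def SchStep.len : SchStep → ℕ
  | .up => 1
  | .down => 1
  | .horiz => 2

/-- The change in height produced by a step. -/
def SchStep.rise : SchStep → ℤ
  | .up => 1
  | .down => -1
  | .horiz => 0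

/-- The length of a path (a double horizontal step counts 2). -/
def pathLen (p : List SchStep) : ℕ := (p.map SchStep.len).sum

/-- The final height of a path started at height 0. -/
def pathHeight (p : List SchStep) : ℤ := (p.map SchStep.rise).sum

/-- A big Schröder path: ends at height 0 and never goes below the x-axis. -/
def IsBigSchroeder (p : List SchStep) : Prop :=
  pathHeight p = 0 ∧ ∀ q : List SchStep, q <+: p → 0 ≤ pathHeight q

/-- A little Schröder path: a big Schröder path with no double horizontal step at
height 0. -/
def IsLittleSchroeder (p : List SchStep) : Prop :=
  IsBigSchroeder p ∧ ∀ q r : List SchStep, p = q ++ SchStep.horiz :: r → pathHeight q ≠ 0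

/-- A Dyck path is a list of booleans: `true` is an upstep, `false` is a downstep. -/
def dyckHeight (p : List Bool) : ℤ := (p.map fun b => if b then (1 : ℤ) else -1).sum

/-- A Dyck path: ends at height 0 and never goes below the x-axis. -/
def IsDyck (p : List Bool) : Prop :=
  dyckHeight p = 0 ∧ ∀ q : List Bool, q <+: p → 0 ≤ dyckHeight q

/-- The number of downsteps of `p` leaving from even height. -/
def evenDownCount (p : List Bool) : ℕ :=
  (List.range p.length).countP fun i =>
    decide (p.getD i true = false ∧ dyckHeight (p.take i) % 2 = 0)

/-!
Both sides are computed through the first-return decomposition `U P₁ D P₂` of a nonempty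
excursion. Let `A_h m` (`dyckWeight h m`) be the total weight of the Dyck paths of length `m`
started at height `h`; only the parity of `h` matters. The return step `D` leaves from height
`h + 1`, so `A₀ (m + 2) = ∑ A₁ i * A₀ j` and `A₁ (m + 2) = 2 * ∑ A₀ i * A₁ j` over `i + j = m`.
A big Schröder path starts with a flat step or with `U P₁ D`, and a little one with `U P₁ D`
followed by a little path, so the big and little counts `R`, `S` (`bigCount`, `littleCount`)
satisfy `R (m + 2) = R m + ∑ R i * R j` and `S (m + 2) = ∑ R i * S j`. Hence
`R m + [m = 0] = 2 * S m`, and then `(S, R)` solves the same system as `(A₀, A₁)` with the same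
initial values.
-/

open Finset

namespace List

variable {α : Type*} {x : α} {P : List α → Prop}

lemma forall_cons_eq_append_cons_iff {a : α} {t : List α} :
    (∀ q r, a :: t = q ++ x :: r → P q) ↔
      (a = x → P []) ∧ ∀ q r, t = q ++ x :: r → P (a :: q) := by
  simp only [cons_eq_append_iff]
  constructor
  · intro h
    exact ⟨fun hax => h [] t (.inl ⟨rfl, by rw [hax]⟩),
      fun q r ht => h _ r (.inr ⟨q, rfl, ht⟩)⟩
  · rintro ⟨h₁, h₂⟩ q r (⟨rfl, hr⟩ | ⟨q, rfl, ht⟩)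
    · exact h₁ (cons.inj hr).1.symm
    · exact h₂ q r ht

lemma forall_append_eq_append_cons_iff {s t : List α} :
    (∀ q r, s ++ t = q ++ x :: r → P q) ↔
      (∀ q r, s = q ++ x :: r → P q) ∧ ∀ q r, t = q ++ x :: r → P (s ++ q) := by
  constructor
  · intro h
    exact ⟨fun q r hs => h q (r ++ t) (by simp [hs]), fun q r ht => h (s ++ q) r (by simp [ht])⟩
  · rintro ⟨h₁, h₂⟩ q r h
    obtain ⟨c, rfl, ht⟩ | ⟨c, rfl, hc⟩ := append_eq_append_iff.mp h
    · exact h₂ c r ht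
    · obtain ⟨rfl, rfl⟩ | ⟨c, rfl, rfl⟩ := cons_eq_append_iff.mp hc
      · simpa using h₂ [] r rfl
      · exact h₁ q c rfl

end List

lemma Finset.Nat.sum_antidiagonal_boole_mul {R : Type*} [NonAssocSemiring R] (f : ℕ → R)
    (m : ℕ) :
    ∑ ij ∈ antidiagonal m, (if ij.1 = 0 then 1 else 0) * f ij.2 = f m := by
  rw [sum_eq_single (0, m) (fun ij hij hne => ?_) (by simp)]
  · simp
  · rw [if_neg, zero_mul]
    rintro h
    exact hne (Prod.ext h (by simpa [h] using hij))

lemma Finset.Nat.sum_antidiagonal_mul_boole {R : Type*} [NonAssocSemiring R] (f : ℕ → R)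
    (m : ℕ) :
    ∑ ij ∈ antidiagonal m, f ij.1 * (if ij.2 = 0 then 1 else 0) = f m := by
  rw [← Nat.sum_antidiagonal_swap]
  simpa [mul_comm] using sum_antidiagonal_boole_mul f m

namespace LatticePath

variable {α : Type*}

section Height

variable (rise : α → ℤ)

def height (p : List α) : ℤ := (p.map rise).sum

def IsExcursion (p : List α) : Prop :=
  height rise p = 0 ∧ ∀ q, q <+: p → 0 ≤ height rise q

variable {rise}

@[simp] lemma height_nil : height rise [] = 0 := rfl

@[simp] lemma height_cons (a : α) (p : List α) :
    height rise (a :: p) = rise a + height rise p := by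
  simp [height]

@[simp] lemma height_append (p q : List α) :
    height rise (p ++ q) = height rise p + height rise q := by
  simp [height]

lemma isExcursion_nil : IsExcursion rise [] :=
  ⟨rfl, fun q hq => by simp [List.prefix_nil.mp hq]⟩

lemma IsExcursion.rise_head_nonneg {a : α} {p : List α} (hp : IsExcursion rise (a :: p)) :
    0 ≤ rise a := by
  simpa using hp.2 [a] (List.singleton_prefix_cons_iff.mpr rfl)

lemma isExcursion_cons_iff_of_rise_eq_zero {h : α} (hh : rise h = 0) {p : List α} :
    IsExcursion rise (h :: p) ↔ IsExcursion rise p := by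
  simp only [IsExcursion, List.prefix_cons_iff, forall_eq_or_imp, height_cons, hh, zero_add]
  constructor
  · rintro ⟨h0, -, hq⟩
    exact ⟨h0, fun q hq' => by simpa [hh] using hq (h :: q) ⟨q, rfl, hq'⟩⟩
  · rintro ⟨h0, hq⟩
    refine ⟨h0, le_rfl, ?_⟩
    rintro _ ⟨q, rfl, hq'⟩
    simpa [hh] using hq q hq'

lemma IsExcursion.glue {u d : α} (hu : rise u = 1) (hd : rise d = -1) {p₁ p₂ : List α}
    (h₁ : IsExcursion rise p₁) (h₂ : IsExcursion rise p₂) :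
    IsExcursion rise (u :: p₁ ++ d :: p₂) := by
  refine ⟨by simp [hu, hd, h₁.1, h₂.1], fun q hq => ?_⟩
  obtain rfl | ⟨t, rfl, ht⟩ := List.prefix_cons_iff.mp hq
  · simp
  rcases List.prefix_or_prefix_of_prefix ht (List.prefix_append p₁ (d :: p₂)) with
    ht₁ | ⟨s, rfl⟩
  · have := h₁.2 t ht₁
    simp only [height_cons, hu]
    linarith
  obtain rfl | ⟨s, rfl, hs⟩ :=
    List.prefix_cons_iff.mp ((List.prefix_append_right_inj p₁).mp ht)
  · simp [hu, h₁.1]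
  · simpa [hu, hd, h₁.1] using h₂.2 s hs

lemma exists_eq_append_cons_of_prefix_height_neg {d : α} (hd : rise d = -1)
    (hdown : ∀ a, rise a < 0 → a = d) {p : List α}
    (hp : ∃ q, q <+: p ∧ height rise q < 0) :
    ∃ p₁ p₂, p = p₁ ++ d :: p₂ ∧ IsExcursion rise p₁ := by
  induction p using List.reverseRecOn with
  | nil => simp at hp
  | append_singleton p a ih =>
    -- either `p` already dips below the axis, or the last step `a` is the first to do so
    by_cases hneg : ∃ q, q <+: p ∧ height rise q < 0
    · obtain ⟨p₁, p₂, rfl, h₁⟩ := ih hneg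
      exact ⟨p₁, p₂ ++ [a], by simp, h₁⟩
    push Not at hneg
    obtain ⟨q, hq, hq₀⟩ := hp
    obtain rfl | hq := List.prefix_concat_iff.mp hq
    · simp only [height_append, height_cons, height_nil, add_zero] at hq₀
      have hp₀ := hneg p List.prefix_rfl
      obtain rfl := hdown a (by linarith)
      exact ⟨p, [], rfl, by linarith, hneg⟩
    · exact absurd hq₀ (not_lt.mpr (hneg q hq))

lemma IsExcursion.exists_glue {u d : α} (hu : rise u = 1) (hd : rise d = -1)
    (hdown : ∀ a, rise a < 0 → a = d) {p : List α} (hp : IsExcursion rise (u :: p)) :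
    ∃ p₁ p₂, p = p₁ ++ d :: p₂ ∧ IsExcursion rise p₁ ∧ IsExcursion rise p₂ := by
  have hneg : height rise p < 0 := by
    have := hp.1
    rw [height_cons, hu] at this
    linarith
  obtain ⟨p₁, p₂, rfl, h₁⟩ :=
    exists_eq_append_cons_of_prefix_height_neg hd hdown ⟨p, List.prefix_rfl, hneg⟩
  refine ⟨p₁, p₂, rfl, h₁, ⟨?_, fun q hq => ?_⟩⟩
  · simpa [hu, hd, h₁.1] using hp.1
  · have := hp.2 (u :: p₁ ++ d :: q)
      (List.cons_prefix_cons.mpr ⟨rfl, (List.prefix_append_right_inj p₁).mpr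
        (List.cons_prefix_cons.mpr ⟨rfl, hq⟩)⟩)
    simpa [hu, hd, h₁.1] using this

lemma IsExcursion.length_le_of_append_cons_eq {d : α} (hd : rise d = -1)
    {p₁ p₂ q₁ q₂ : List α} (hp : height rise p₁ = 0) (hq : IsExcursion rise q₁)
    (h : p₁ ++ d :: p₂ = q₁ ++ d :: q₂) :
    q₁.length ≤ p₁.length := by
  by_contra! hlt
  have hd_prefix : p₁ ++ [d] <+: q₁ ++ d :: q₂ :=
    h ▸ (List.prefix_append_right_inj p₁).mpr
      (List.cons_prefix_cons.mpr ⟨rfl, List.nil_prefix⟩)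
  have hpre : p₁ ++ [d] <+: q₁ :=
    List.prefix_of_prefix_length_le hd_prefix (List.prefix_append _ _) (by simpa using hlt)
  have := hq.2 _ hpre
  simp [hp, hd] at this

lemma IsExcursion.eq_of_append_cons_eq {d : α} (hd : rise d = -1) {p₁ p₂ q₁ q₂ : List α}
    (hp : IsExcursion rise p₁) (hq : IsExcursion rise q₁)
    (h : p₁ ++ d :: p₂ = q₁ ++ d :: q₂) :
    p₁ = q₁ ∧ p₂ = q₂ := by
  have hlen := le_antisymm (hp.length_le_of_append_cons_eq hd hq.1 h.symm)
    (hq.length_le_of_append_cons_eq hd hp.1 h)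
  obtain ⟨rfl, h'⟩ := List.append_inj h hlen
  exact ⟨rfl, (List.cons.inj h').2⟩

end Height

section Size

variable (len : α → ℕ)

def size (p : List α) : ℕ := (p.map len).sum

variable {len}

@[simp] lemma size_nil : size len [] = 0 := rfl

@[simp] lemma size_cons (a : α) (p : List α) : size len (a :: p) = len a + size len p := by
  simp [size]

@[simp] lemma size_append (p q : List α) : size len (p ++ q) = size len p + size len q := by
  simp [size]

lemma length_le_size (hlen : ∀ a, 0 < len a) (p : List α) : p.length ≤ size len p := by
  induction p with
  | nil => simp
  | cons a p ih => simp only [List.length_cons, size_cons]; linarith [hlen a]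

@[simp] lemma size_const_one (p : List α) : size (fun _ => 1) p = p.length := by
  simp [size]

lemma height_emod_two_eq {rise : α → ℤ} (hpar : ∀ a, rise a % 2 = len a % 2) (p : List α) :
    height rise p % 2 = size len p % 2 := by
  induction p with
  | nil => rfl
  | cons a p ih =>
    have := hpar a
    simp only [height_cons, size_cons, Nat.cast_add]
    omega

lemma IsExcursion.even_size {rise : α → ℤ} (hpar : ∀ a, rise a % 2 = len a % 2) {p : List α}
    (hp : IsExcursion rise p) : Even (size len p) := by
  have := height_emod_two_eq hpar p
  rw [hp.1] at this
  exact Nat.even_iff.mpr (by omega)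

end Size

section Excursions

variable [Finite α]

noncomputable def excursions (rise : α → ℤ) (len : α → ℕ) (m : ℕ) :
    Finset (List α) := by
  classical
  exact (List.finite_length_le α m).toFinset.filter
    (fun p => IsExcursion rise p ∧ size len p = m)

variable {rise : α → ℤ} {len : α → ℕ}

lemma mem_excursions (hlen : ∀ a, 0 < len a) {m : ℕ} {p : List α} :
    p ∈ excursions rise len m ↔ IsExcursion rise p ∧ size len p = m := by
  simp only [excursions, mem_filter, Set.Finite.mem_toFinset, Set.mem_ofPred_eq,
    and_iff_right_iff_imp]
  rintro ⟨-, rfl⟩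
  exact length_le_size hlen p

lemma exists_cons_of_mem_excursions {m : ℕ} {p : List α}
    (hp : p ∈ excursions rise len (m + 1)) :
    ∃ a q, p = a :: q := by
  simp only [excursions, mem_filter] at hp
  exact List.exists_cons_of_ne_nil (by rintro rfl; simp at hp)

lemma excursions_zero (hlen : ∀ a, 0 < len a) : excursions rise len 0 = {[]} := by
  ext p
  rw [mem_excursions hlen, mem_singleton]
  constructor
  · rintro ⟨-, hp⟩
    exact List.length_eq_zero_iff.mp (by linarith [length_le_size hlen p])
  · rintro rfl
    exact ⟨isExcursion_nil, rfl⟩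

lemma excursions_eq_empty_of_odd (hlen : ∀ a, 0 < len a) (hpar : ∀ a, rise a % 2 = len a % 2)
    {m : ℕ} (hm : Odd m) : excursions rise len m = ∅ := by
  ext p
  simp only [mem_excursions hlen, Finset.notMem_empty, iff_false, not_and]
  rintro hp rfl
  exact Nat.not_even_iff_odd.mpr hm (hp.even_size hpar)

variable [DecidableEq α] {M : Type*} [AddCommMonoid M]

lemma sum_excursions_head_eq_up {u d : α} (hu : rise u = 1) (hd : rise d = -1)
    (hdown : ∀ a, rise a < 0 → a = d) (hlen : ∀ a, 0 < len a) (hlu : len u = 1)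
    (hld : len d = 1) (g : List α → M) (m : ℕ) :
    ∑ p ∈ excursions rise len (m + 2) with p.head? = some u, g p =
      ∑ ij ∈ antidiagonal m, ∑ p₁ ∈ excursions rise len ij.1,
        ∑ p₂ ∈ excursions rise len ij.2, g (u :: p₁ ++ d :: p₂) := by
  simp_rw [← sum_product']
  rw [sum_sigma']
  symm
  refine sum_nbij (fun x => u :: x.2.1 ++ d :: x.2.2) ?_ ?_ ?_ (fun _ _ => rfl)
  · rintro ⟨⟨i, j⟩, p₁, p₂⟩ hx
    simp only [mem_sigma, HasAntidiagonal.mem_antidiagonal, mem_product, mem_excursions hlen] at hx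
    obtain ⟨hij, ⟨h₁, rfl⟩, ⟨h₂, rfl⟩⟩ := hx
    simp only [mem_filter, mem_excursions hlen]
    refine ⟨⟨h₁.glue hu hd h₂, ?_⟩, rfl⟩
    simp only [List.cons_append, size_cons, size_append, hlu, hld]
    omega
  · rintro ⟨⟨i, j⟩, p₁, p₂⟩ hx ⟨⟨i', j'⟩, q₁, q₂⟩ hy h
    simp only [coe_sigma, Set.mem_sigma_iff, mem_coe, HasAntidiagonal.mem_antidiagonal, mem_product,
      mem_excursions hlen] at hx hy
    obtain ⟨-, ⟨h₁, rfl⟩, ⟨-, rfl⟩⟩ := hx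
    obtain ⟨-, ⟨h₁', rfl⟩, ⟨-, rfl⟩⟩ := hy
    obtain ⟨rfl, rfl⟩ := h₁.eq_of_append_cons_eq hd h₁' (List.cons.inj h).2
    rfl
  · intro p hp
    obtain ⟨_, p, rfl⟩ := exists_cons_of_mem_excursions (mem_filter.mp hp).1
    simp only [coe_filter, mem_excursions hlen, Set.mem_ofPred_eq] at hp
    obtain ⟨⟨hp, hsize⟩, hhead⟩ := hp
    obtain rfl : _ = u := by simpa using hhead
    obtain ⟨p₁, p₂, rfl, h₁, h₂⟩ := hp.exists_glue hu hd hdown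
    refine ⟨⟨(size len p₁, size len p₂), p₁, p₂⟩, ?_, rfl⟩
    simp only [coe_sigma, Set.mem_sigma_iff, mem_coe, HasAntidiagonal.mem_antidiagonal, mem_product,
      mem_excursions hlen, and_true]
    refine ⟨?_, h₁, h₂⟩
    simp only [size_cons, size_append, hlu, hld] at hsize
    omega

lemma sum_excursions_head_eq_flat {h : α} (hh : rise h = 0) (hlen : ∀ a, 0 < len a)
    (hlh : len h = 2) (g : List α → M) (m : ℕ) :
    ∑ p ∈ excursions rise len (m + 2) with p.head? = some h, g p =
      ∑ p ∈ excursions rise len m, g (h :: p) := by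
  symm
  refine sum_nbij (h :: ·) ?_ List.cons_injective.injOn ?_ (fun _ _ => rfl)
  · intro p hp
    simp only [mem_filter, mem_excursions hlen] at hp ⊢
    refine ⟨⟨(isExcursion_cons_iff_of_rise_eq_zero hh).mpr hp.1, ?_⟩, rfl⟩
    rw [size_cons, hlh, hp.2, add_comm]
  · intro p hp
    obtain ⟨_, p, rfl⟩ := exists_cons_of_mem_excursions (mem_filter.mp hp).1
    simp only [coe_filter, mem_excursions hlen, Set.mem_ofPred_eq] at hp
    obtain ⟨⟨hp, hsize⟩, hhead⟩ := hp
    obtain rfl : _ = h := by simpa using hhead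
    refine ⟨p, ?_, rfl⟩
    simp only [mem_coe, mem_excursions hlen]
    refine ⟨(isExcursion_cons_iff_of_rise_eq_zero hh).mp hp, ?_⟩
    rw [size_cons, hlh] at hsize
    omega

end Excursions

end LatticePath

open LatticePath

def boolRise (b : Bool) : ℤ := if b then 1 else -1

@[simp] lemma boolRise_true : boolRise true = 1 := rfl

@[simp] lemma boolRise_false : boolRise false = -1 := rfl

lemma isDyck_iff_isExcursion {p : List Bool} : IsDyck p ↔ IsExcursion boolRise p := Iff.rfl

lemma dyckHeight_eq_height (p : List Bool) : dyckHeight p = height boolRise p := rfl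

def evenDownsFrom : ℤ → List Bool → ℕ
  | _, [] => 0
  | h, true :: p => evenDownsFrom (h + 1) p
  | h, false :: p => evenDownsFrom (h - 1) p + if h % 2 = 0 then 1 else 0

lemma evenDownsFrom_append (h : ℤ) (p q : List Bool) :
    evenDownsFrom h (p ++ q) = evenDownsFrom h p + evenDownsFrom (h + height boolRise p) q := by
  induction p generalizing h with
  | nil => simp [evenDownsFrom]
  | cons b p ih =>
    cases b <;> simp [evenDownsFrom, ih] <;> ring_nf

lemma evenDownsFrom_add_two (h : ℤ) (p : List Bool) :
    evenDownsFrom (h + 2) p = evenDownsFrom h p := by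
  induction p generalizing h with
  | nil => rfl
  | cons b p ih =>
    cases b
    · simp only [evenDownsFrom, show h + 2 - 1 = h - 1 + 2 by ring, ih, Int.add_emod_right]
    · simp only [evenDownsFrom, show h + 2 + 1 = h + 1 + 2 by ring, ih]

lemma countP_range_eq_evenDownsFrom (h : ℤ) (p : List Bool) :
    (List.range p.length).countP (fun i =>
      decide (p.getD i true = false ∧ (h + dyckHeight (p.take i)) % 2 = 0)) =
      evenDownsFrom h p := by
  induction p generalizing h with
  | nil => rfl
  | cons b p ih =>
    rw [List.length_cons, List.range_succ_eq_map, List.countP_cons, List.countP_map]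
    cases b <;> simp [evenDownsFrom, Function.comp_def, dyckHeight_eq_height, ← ih, add_assoc,
      sub_eq_add_neg]

lemma evenDownCount_eq_evenDownsFrom (p : List Bool) : evenDownCount p = evenDownsFrom 0 p := by
  simp only [evenDownCount, ← countP_range_eq_evenDownsFrom, zero_add]

noncomputable def dyckWeight (h : ℤ) (m : ℕ) : ℕ :=
  ∑ p ∈ excursions boolRise (fun _ => 1) m, 2 ^ evenDownsFrom h p

lemma dyckWeight_zero (h : ℤ) : dyckWeight h 0 = 1 := by
  simp [dyckWeight, excursions_zero (fun _ => one_pos), evenDownsFrom]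

lemma dyckWeight_one (h : ℤ) : dyckWeight h 1 = 0 := by
  rw [dyckWeight, excursions_eq_empty_of_odd (fun _ => one_pos) (by decide) odd_one, sum_empty]

lemma dyckWeight_add_two_left (h : ℤ) (m : ℕ) : dyckWeight (h + 2) m = dyckWeight h m := by
  simp only [dyckWeight, evenDownsFrom_add_two]

lemma dyckWeight_add_two (h : ℤ) (m : ℕ) :
    dyckWeight h (m + 2) = 2 ^ (if (h + 1) % 2 = 0 then 1 else 0) *
      ∑ ij ∈ antidiagonal m, dyckWeight (h + 1) ij.1 * dyckWeight h ij.2 := by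
  have hhead : ∀ p ∈ excursions boolRise (fun _ => 1) (m + 2), p.head? = some true := by
    intro p hp
    obtain ⟨b, p, rfl⟩ := exists_cons_of_mem_excursions hp
    cases b
    · simpa using ((mem_excursions (fun _ => one_pos)).mp hp).1.rise_head_nonneg
    · rfl
  rw [dyckWeight, ← filter_true_of_mem hhead, sum_excursions_head_eq_up (u := true) (d := false)
    rfl rfl (by decide) (fun _ => one_pos) rfl rfl, mul_sum]
  refine sum_congr rfl fun ij _ => ?_
  rw [dyckWeight, dyckWeight, sum_mul_sum, mul_sum]
  refine sum_congr rfl fun p₁ hp₁ => ?_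
  rw [mul_sum]
  refine sum_congr rfl fun p₂ _ => ?_
  have hp₁ : height boolRise p₁ = 0 := ((mem_excursions (fun _ => one_pos)).mp hp₁).1.1
  simp only [List.cons_append, evenDownsFrom, evenDownsFrom_append, hp₁, add_zero,
    add_sub_cancel_right, pow_add]
  ring

instance : Fintype SchStep := ⟨{.up, .down, .horiz}, fun x => by cases x <;> simp⟩

@[simp] lemma SchStep.rise_up : SchStep.up.rise = 1 := rfl

@[simp] lemma SchStep.rise_down : SchStep.down.rise = -1 := rfl

@[simp] lemma SchStep.rise_horiz : SchStep.horiz.rise = 0 := rfl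

lemma SchStep.eq_down_of_rise_neg {a : SchStep} (ha : a.rise < 0) : a = .down := by
  cases a <;> simp_all

lemma SchStep.len_pos (a : SchStep) : 0 < a.len := by
  cases a <;> decide

lemma isBigSchroeder_iff_isExcursion {p : List SchStep} :
    IsBigSchroeder p ↔ IsExcursion SchStep.rise p := Iff.rfl

lemma pathHeight_eq_height (p : List SchStep) : pathHeight p = height SchStep.rise p := rfl

lemma IsLittleSchroeder.eq_up_of_cons {a : SchStep} {p : List SchStep}
    (hp : IsLittleSchroeder (a :: p)) : a = .up := by
  cases a
  · rfl
  · simpa using (isBigSchroeder_iff_isExcursion.mp hp.1).rise_head_nonneg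
  · exact absurd rfl (hp.2 [] p rfl)

lemma isLittleSchroeder_up_append_down_iff {p₁ p₂ : List SchStep} (h₁ : IsBigSchroeder p₁)
    (h₂ : IsBigSchroeder p₂) :
    IsLittleSchroeder (.up :: p₁ ++ .down :: p₂) ↔ IsLittleSchroeder p₂ := by
  rw [isBigSchroeder_iff_isExcursion] at h₁ h₂
  have hprefix : ∀ q r, p₁ = q ++ .horiz :: r → 1 + height SchStep.rise q ≠ 0 := by
    rintro q r rfl
    linarith [h₁.2 q (List.prefix_append _ _)]
  simp only [IsLittleSchroeder, isBigSchroeder_iff_isExcursion, h₂,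
    h₁.glue SchStep.rise_up SchStep.rise_down h₂, List.forall_append_eq_append_cons_iff,
    List.forall_cons_eq_append_cons_iff, pathHeight_eq_height, height_cons, height_nil,
    height_append, h₁.1, SchStep.rise_up, SchStep.rise_down, reduceCtorEq, false_imp_iff,
    true_and, add_zero, add_neg_cancel_left]
  exact and_iff_right hprefix

noncomputable def bigCount (m : ℕ) : ℕ := #(excursions SchStep.rise SchStep.len m)

open Classical in
noncomputable def littleCount (m : ℕ) : ℕ :=
  #{p ∈ excursions SchStep.rise SchStep.len m | IsLittleSchroeder p}

lemma mem_schroeder_excursions {m : ℕ} {p : List SchStep} :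
    p ∈ excursions SchStep.rise SchStep.len m ↔ IsBigSchroeder p ∧ pathLen p = m :=
  mem_excursions SchStep.len_pos

lemma bigCount_zero : bigCount 0 = 1 := by
  simp [bigCount, excursions_zero SchStep.len_pos]

lemma littleCount_zero : littleCount 0 = 1 := by
  rw [littleCount, excursions_zero SchStep.len_pos, filter_singleton,
    if_pos ⟨isExcursion_nil, by simp⟩, card_singleton]

lemma schroeder_excursions_one : excursions SchStep.rise SchStep.len 1 = ∅ :=
  excursions_eq_empty_of_odd SchStep.len_pos (by decide) odd_one

lemma bigCount_one : bigCount 1 = 0 := by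
  simp [bigCount, schroeder_excursions_one]

lemma littleCount_one : littleCount 1 = 0 := by
  simp [littleCount, schroeder_excursions_one]

lemma bigCount_add_two (m : ℕ) :
    bigCount (m + 2) = bigCount m + ∑ ij ∈ antidiagonal m, bigCount ij.1 * bigCount ij.2 := by
  have hhead : ∀ p ∈ excursions SchStep.rise SchStep.len (m + 2),
      ¬ p.head? = some .horiz ↔ p.head? = some .up := by
    intro p hp
    obtain ⟨a, p, rfl⟩ := exists_cons_of_mem_excursions hp
    cases a
    · simp
    · simpa using ((mem_excursions SchStep.len_pos).mp hp).1.rise_head_nonneg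
    · simp
  rw [bigCount, card_eq_sum_ones, ← sum_filter_add_sum_filter_not _ (·.head? = some .horiz),
    filter_congr hhead,
    sum_excursions_head_eq_flat SchStep.rise_horiz SchStep.len_pos rfl,
    sum_excursions_head_eq_up SchStep.rise_up SchStep.rise_down
      (fun _ => SchStep.eq_down_of_rise_neg) SchStep.len_pos rfl rfl]
  simp only [bigCount, sum_const, smul_eq_mul, mul_one]

lemma littleCount_add_two (m : ℕ) :
    littleCount (m + 2) = ∑ ij ∈ antidiagonal m, bigCount ij.1 * littleCount ij.2 := by
  classical
  have hhead : ∀ p ∈ excursions SchStep.rise SchStep.len (m + 2),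
      (if IsLittleSchroeder p then 1 else 0) ≠ 0 → p.head? = some .up := by
    intro p hp hlittle
    obtain ⟨a, p, rfl⟩ := exists_cons_of_mem_excursions hp
    rw [(ite_ne_right_iff.mp hlittle).1.eq_up_of_cons]
    rfl
  rw [littleCount, card_filter, ← sum_filter_of_ne hhead,
    sum_excursions_head_eq_up SchStep.rise_up SchStep.rise_down
      (fun _ => SchStep.eq_down_of_rise_neg) SchStep.len_pos rfl rfl]
  refine sum_congr rfl fun ij _ => ?_
  rw [bigCount, littleCount, card_filter, card_eq_sum_ones, sum_mul_sum]
  refine sum_congr rfl fun p₁ hp₁ => sum_congr rfl fun p₂ hp₂ => ?_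
  rw [one_mul, isLittleSchroeder_up_append_down_iff (mem_schroeder_excursions.mp hp₁).1
    (mem_schroeder_excursions.mp hp₂).1]

lemma bigCount_add_boole_eq (m : ℕ) :
    bigCount m + (if m = 0 then 1 else 0) = 2 * littleCount m := by
  induction m using Nat.strong_induction_on with
  | _ m ih =>
    match m, ih with
    | 0, _ => simp [bigCount_zero, littleCount_zero]
    | 1, _ => simp [bigCount_one, littleCount_one]
    | m + 2, ih =>
      have hle : ∀ ij ∈ antidiagonal m, ij.2 < m + 2 := fun ij hij => by
        have := HasAntidiagonal.mem_antidiagonal.mp hij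
        omega
      calc bigCount (m + 2) + (if m + 2 = 0 then 1 else 0)
          = ∑ ij ∈ antidiagonal m,
              bigCount ij.1 * (bigCount ij.2 + if ij.2 = 0 then 1 else 0) := by
            rw [bigCount_add_two, if_neg (by omega), add_zero, add_comm]
            simp only [mul_add, sum_add_distrib, Nat.sum_antidiagonal_mul_boole]
        _ = 2 * littleCount (m + 2) := by
            rw [littleCount_add_two, mul_sum]
            refine sum_congr rfl fun ij hij => ?_
            rw [ih ij.2 (hle ij hij)]
            ring

lemma dyckWeight_eq_counts (m : ℕ) :
    dyckWeight 0 m = littleCount m ∧ dyckWeight 1 m = bigCount m := by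
  induction m using Nat.strong_induction_on with
  | _ m ih =>
    match m, ih with
    | 0, _ => simp [dyckWeight_zero, bigCount_zero, littleCount_zero]
    | 1, _ => simp [dyckWeight_one, bigCount_one, littleCount_one]
    | m + 2, ih =>
      have hlt : ∀ ij ∈ antidiagonal m, ij.1 < m + 2 ∧ ij.2 < m + 2 := fun ij hij => by
        have := HasAntidiagonal.mem_antidiagonal.mp hij
        omega
      constructor
      · rw [dyckWeight_add_two, zero_add, if_neg (by decide), pow_zero, one_mul,
          littleCount_add_two]
        refine sum_congr rfl fun ij hij => ?_
        rw [(ih _ (hlt ij hij).1).2, (ih _ (hlt ij hij).2).1]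
      · calc dyckWeight 1 (m + 2)
            = ∑ ij ∈ antidiagonal m,
                (bigCount ij.1 + if ij.1 = 0 then 1 else 0) * bigCount ij.2 := by
              rw [dyckWeight_add_two, if_pos (by decide), pow_one, mul_sum]
              refine sum_congr rfl fun ij hij => ?_
              rw [show (1 : ℤ) + 1 = 0 + 2 by norm_num, dyckWeight_add_two_left,
                (ih _ (hlt ij hij).1).1, (ih _ (hlt ij hij).2).2, bigCount_add_boole_eq]
              ring
          _ = bigCount (m + 2) := by
              simp only [add_mul, sum_add_distrib, Nat.sum_antidiagonal_boole_mul, bigCount_add_two,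
                add_comm]

lemma finsum_pow_evenDownCount_eq_dyckWeight (m : ℕ) :
    (∑ᶠ p ∈ {p : List Bool | IsDyck p ∧ p.length = m}, 2 ^ evenDownCount p) =
      dyckWeight 0 m := by
  have hset :
      {p : List Bool | IsDyck p ∧ p.length = m} = ↑(excursions boolRise (fun _ => 1) m) := by
    ext p
    simp [mem_excursions, isDyck_iff_isExcursion]
  rw [hset, finsum_mem_coe_finset, dyckWeight]
  simp only [evenDownCount_eq_evenDownsFrom]

lemma card_littleSchroeder_eq_littleCount (m : ℕ) :
    Nat.card {q : List SchStep // IsLittleSchroeder q ∧ pathLen q = m} = littleCount m := by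
  classical
  have hset : {q : List SchStep | IsLittleSchroeder q ∧ pathLen q = m} =
      ↑{p ∈ excursions SchStep.rise SchStep.len m | IsLittleSchroeder p} := by
    ext q
    simp only [Set.mem_ofPred_eq, coe_filter, mem_schroeder_excursions]
    exact ⟨fun h => ⟨⟨h.1.1, h.2⟩, h.1⟩, fun h => ⟨h.2, h.1.2⟩⟩
  rw [← Set.coe_ofPred, Nat.card_coe_set_eq, hset, Set.ncard_coe_finset, littleCount]

/-- The total weight of Dyck paths of length `2n`, where each path is weighted by
`2 ^ (number of downsteps from even height)`, equals the number of little Schröder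
paths of length `2n`. -/
theorem weighted_dyck_eq_little_schroeder (n : ℕ) :
    (∑ᶠ p ∈ {p : List Bool | IsDyck p ∧ p.length = 2 * n}, 2 ^ evenDownCount p) =
      Nat.card {q : List SchStep // IsLittleSchroeder q ∧ pathLen q = 2 * n} := by
  rw [finsum_pow_evenDownCount_eq_dyckWeight, card_littleSchroeder_eq_littleCount]
  exact (dyckWeight_eq_counts (2 * n)).1
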